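/- The Φ-hyperbolic functions satisfy the supersymmetric hyperbolic identity Ch(x₀,x)·C̃h(x₀,x) − Sh(x₀,x)·S̃h(x₀,x) = 1 for all x₀, x ∈ [a,b]. -/

import Mathlib

/-!
Write `u n = X⁽ⁿ⁾ / n!` and `v n = X̃⁽ⁿ⁾ / n!`; `X̃` is `X` built from `1/Φ`. Then
`u (n+1)' = Φ^((-1)^(n+1)) u n` and `v (n+1)' = Φ^((-1)^n) v n`, so for even `N` the derivative of
`∑_{i+k=N} (-1)^i u_i v_k` telescopes to zero. At `x = x₀` every `u i`, `v k` with a positive index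
vanishes, so these sums are `0` for even `N > 0`. Since `Ch C̃h - Sh S̃h` is the sum of them over
even `N`, it equals the `N = 0` term, `1`.
-/

noncomputable def genX (Φ : ℝ → ℂ) : ℕ → ℝ → ℝ → ℂ
  | 0 => fun _ _ => 1
  | n + 1 => fun x₀ x =>
      (n + 1 : ℕ) * ∫ ξ in x₀..x, genX Φ n x₀ ξ * Φ ξ ^ ((-1 : ℤ) ^ (n + 1))

noncomputable def genXt (Φ : ℝ → ℂ) : ℕ → ℝ → ℝ → ℂ
  | 0 => fun _ _ => 1
  | n + 1 => fun x₀ x =>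
      (n + 1 : ℕ) * ∫ ξ in x₀..x, genXt Φ n x₀ ξ * Φ ξ ^ (-((-1 : ℤ) ^ (n + 1)))

noncomputable def genCh (Φ : ℝ → ℂ) (x₀ x : ℝ) : ℂ :=
  ∑' j : ℕ, genX Φ (2 * j) x₀ x / ((2 * j).factorial : ℂ)

noncomputable def genCht (Φ : ℝ → ℂ) (x₀ x : ℝ) : ℂ :=
  ∑' k : ℕ, genXt Φ (2 * k) x₀ x / ((2 * k).factorial : ℂ)

noncomputable def genSh (Φ : ℝ → ℂ) (x₀ x : ℝ) : ℂ :=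
  ∑' j : ℕ, genX Φ (2 * j + 1) x₀ x / ((2 * j + 1).factorial : ℂ)

noncomputable def genSht (Φ : ℝ → ℂ) (x₀ x : ℝ) : ℂ :=
  ∑' k : ℕ, genXt Φ (2 * k + 1) x₀ x / ((2 * k + 1).factorial : ℂ)

open Finset

theorem tsum_even_add_tsum_odd {R : Type*} [NormedRing R] [CompleteSpace R] {c : ℕ → R}
    (hc : Summable c) : ∑' j, c (2 * j) + ∑' j, c (2 * j + 1) = ∑' n, c n :=
  tsum_even_add_odd (hc.comp_injective (mul_right_injective₀ two_ne_zero))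
    (hc.comp_injective ((add_left_injective 1).comp (mul_right_injective₀ two_ne_zero)))

theorem tsum_even_sub_tsum_odd {R : Type*} [NormedRing R] [CompleteSpace R] {c : ℕ → R}
    (hc : Summable c) : ∑' j, c (2 * j) - ∑' j, c (2 * j + 1) = ∑' n, (-1) ^ n * c n := by
  rw [← tsum_even_add_tsum_odd hc.alternating]
  simp [pow_succ, pow_mul, tsum_neg, sub_eq_add_neg]

-- With `E`, `O` the sums over even and odd indices, `2 (E a E b - O a O b)` is
-- `(E a - O a)(E b + O b) + (E a + O a)(E b - O b)`, a sum of two Cauchy products whose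
-- `N`-th terms are `B N` and `(-1)^N B N` for `B N = ∑_{i+k=N} (-1)^i a_i b_k`.
theorem tsum_even_mul_tsum_even_sub_tsum_odd_mul_tsum_odd {𝕜 : Type*} [RCLike 𝕜] {a b : ℕ → 𝕜}
    (ha : Summable fun n => ‖a n‖) (hb : Summable fun n => ‖b n‖)
    (hB : ∀ n, ∑ p ∈ antidiagonal (2 * n + 2), (-1) ^ p.1 * a p.1 * b p.2 = 0) :
    (∑' j, a (2 * j)) * (∑' k, b (2 * k)) - (∑' j, a (2 * j + 1)) * (∑' k, b (2 * k + 1)) =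
      a 0 * b 0 := by
  set B : ℕ → 𝕜 := fun N => ∑ p ∈ antidiagonal N, (-1) ^ p.1 * a p.1 * b p.2
  have ha' : Summable fun n => ‖(-1) ^ n * a n‖ := by simpa using ha
  have hb' : Summable fun n => ‖(-1) ^ n * b n‖ := by simpa using hb
  have hterm : ∀ N, ∑ p ∈ antidiagonal N, a p.1 * ((-1) ^ p.2 * b p.2) = (-1) ^ N * B N := by
    intro N
    rw [mul_sum]
    refine sum_congr rfl fun p hp => ?_
    rw [← HasAntidiagonal.mem_antidiagonal.1 hp]
    have hsq : (-1 : 𝕜) ^ p.1 * (-1) ^ p.1 = 1 := by rw [← mul_pow]; norm_num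
    rw [pow_add]
    linear_combination (-(a p.1 * ((-1) ^ p.2 * b p.2))) * hsq
  have h₁ : (∑' n, (-1) ^ n * a n) * ∑' n, b n = ∑' N, B N :=
    tsum_mul_tsum_eq_tsum_sum_antidiagonal_of_summable_norm ha' hb
  have h₂ : (∑' n, a n) * ∑' n, (-1) ^ n * b n = ∑' N, (-1) ^ N * B N := by
    rw [tsum_mul_tsum_eq_tsum_sum_antidiagonal_of_summable_norm ha hb']
    exact tsum_congr hterm
  have hB₁ : Summable B := (summable_norm_sum_mul_antidiagonal_of_summable_norm ha' hb).of_norm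
  have hB₂ : Summable fun N => (-1) ^ N * B N := by
    simpa only [hterm] using (summable_norm_sum_mul_antidiagonal_of_summable_norm ha hb').of_norm
  -- odd `N` cancel and even `N > 0` vanish by `hB`
  have h₃ : ∑' N, (B N + (-1) ^ N * B N) = 2 * (a 0 * b 0) := by
    rw [tsum_eq_single 0]
    · simp [B]; ring
    intro N hN
    obtain ⟨m, rfl | rfl⟩ := N.even_or_odd'
    · obtain ⟨m, rfl⟩ := Nat.exists_eq_succ_of_ne_zero (by omega : m ≠ 0)
      simp only [B, show 2 * (m + 1) = 2 * m + 2 by ring, hB m, mul_zero, add_zero]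
    · simp [pow_succ, pow_mul]
  rw [hB₁.tsum_add hB₂, ← h₁, ← h₂, ← tsum_even_add_tsum_odd ha.of_norm,
    ← tsum_even_sub_tsum_odd ha.of_norm, ← tsum_even_add_tsum_odd hb.of_norm,
    ← tsum_even_sub_tsum_odd hb.of_norm] at h₃
  linear_combination h₃ / 2

theorem hasDerivAt_sum_antidiagonal_neg_one_pow_mul {𝕜 : Type*} [RCLike 𝕜] {u v : ℕ → ℝ → 𝕜}
    {w : ℕ → 𝕜} {y : ℝ} (hw : Function.Periodic w 2) (hu₀ : HasDerivAt (u 0) 0 y)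
    (hv₀ : HasDerivAt (v 0) 0 y)
    (hu : ∀ n, HasDerivAt (u (n + 1)) (u n y * w (n + 1)) y)
    (hv : ∀ n, HasDerivAt (v (n + 1)) (v n y * w n) y) (n : ℕ) :
    HasDerivAt (fun z => ∑ p ∈ antidiagonal (2 * n + 2), (-1) ^ p.1 * u p.1 z * v p.2 z) 0 y := by
  have hu' : ∀ m, HasDerivAt (u m) (deriv (u m) y) y := by
    rintro (_ | m)
    exacts [hu₀.differentiableAt.hasDerivAt, (hu m).differentiableAt.hasDerivAt]
  have hv' : ∀ m, HasDerivAt (v m) (deriv (v m) y) y := by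
    rintro (_ | m)
    exacts [hv₀.differentiableAt.hasDerivAt, (hv m).differentiableAt.hasDerivAt]
  have hdu : ∑ p ∈ antidiagonal (2 * n + 1 + 1), (-1) ^ p.1 * deriv (u p.1) y * v p.2 y =
      -∑ p ∈ antidiagonal (2 * n + 1), (-1) ^ p.1 * u p.1 y * v p.2 y * w (p.1 + 1) := by
    rw [Nat.sum_antidiagonal_succ, hu₀.deriv, ← sum_neg_distrib]
    simp only [(hu _).deriv, mul_zero, zero_mul, zero_add]
    exact sum_congr rfl fun p _ => by ring
  -- `p.2` and `p.1 + 1` have the same parity on the odd antidiagonal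
  have hw_eq : ∀ p ∈ antidiagonal (2 * n + 1), w p.2 = w (p.1 + 1) := fun p hp => by
    rw [HasAntidiagonal.mem_antidiagonal] at hp
    rw [← hw.map_mod_nat p.2, ← hw.map_mod_nat (p.1 + 1), show p.2 % 2 = (p.1 + 1) % 2 by omega]
  have hdv : ∑ p ∈ antidiagonal (2 * n + 1 + 1), (-1) ^ p.1 * u p.1 y * deriv (v p.2) y =
      ∑ p ∈ antidiagonal (2 * n + 1), (-1) ^ p.1 * u p.1 y * v p.2 y * w (p.1 + 1) := by
    rw [Nat.sum_antidiagonal_succ', hv₀.deriv]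
    simp only [(hv _).deriv, mul_zero, zero_add]
    exact sum_congr rfl fun p hp => by rw [← hw_eq p hp]; ring
  refine (HasDerivAt.fun_sum (u := antidiagonal (2 * n + 2)) fun p _ =>
    ((hu' p.1).const_mul ((-1 : 𝕜) ^ p.1)).mul (hv' p.2)).congr_deriv ?_
  rw [sum_add_distrib, hdu, hdv, neg_add_cancel]

theorem genXt_eq_genX_inv (Φ : ℝ → ℂ) : genXt Φ = genX Φ⁻¹ := by
  funext n x₀ x
  induction n generalizing x with
  | zero => rfl
  | succ n ih => simp only [genX, genXt, ih, Pi.inv_apply, inv_zpow']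

theorem genX_succ_self (Φ : ℝ → ℂ) (n : ℕ) (x₀ : ℝ) : genX Φ (n + 1) x₀ x₀ = 0 := by
  simp [genX]

theorem genX_congr {Φ Ψ : ℝ → ℂ} {s : Set ℝ} [hs : s.OrdConnected] (h : Set.EqOn Φ Ψ s)
    {x₀ : ℝ} (hx₀ : x₀ ∈ s) (n : ℕ) : Set.EqOn (genX Φ n x₀) (genX Ψ n x₀) s := by
  induction n with
  | zero => exact fun _ _ => rfl
  | succ n ih =>
    intro x hx
    simp only [genX]
    congr 1
    refine intervalIntegral.integral_congr fun ξ hξ => ?_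
    have hξs : ξ ∈ s := hs.uIcc_subset hx₀ hx hξ
    simp only [ih hξs, h hξs]

section
variable {Φ : ℝ → ℂ} (hc : Continuous Φ) (h0 : ∀ y, Φ y ≠ 0)
include hc h0

theorem continuous_genX (n : ℕ) (x₀ : ℝ) : Continuous (genX Φ n x₀) := by
  induction n with
  | zero => exact continuous_const
  | succ n ih =>
    exact continuous_const.mul (intervalIntegral.continuous_primitive
      (fun a b => (ih.mul (hc.zpow₀ _ fun y => .inl (h0 y))).intervalIntegrable a b) x₀)

theorem hasDerivAt_genX_succ (n : ℕ) (x₀ y : ℝ) :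
    HasDerivAt (genX Φ (n + 1) x₀) ((n + 1 : ℕ) * (genX Φ n x₀ y * Φ y ^ ((-1 : ℤ) ^ (n + 1)))) y :=
  ((((continuous_genX hc h0 n x₀).mul (hc.zpow₀ _ fun y => .inl (h0 y))).integral_hasStrictDerivAt
    x₀ y).hasDerivAt.const_mul _)

theorem hasDerivAt_genX_succ_div_factorial (n : ℕ) (x₀ y : ℝ) :
    HasDerivAt (fun z => genX Φ (n + 1) x₀ z / (n + 1).factorial)
      (genX Φ n x₀ y / n.factorial * Φ y ^ ((-1 : ℤ) ^ (n + 1))) y := by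
  refine ((hasDerivAt_genX_succ hc h0 n x₀ y).div_const _).congr_deriv ?_
  rw [Nat.factorial_succ, Nat.cast_mul]
  field_simp

end

theorem norm_genX_le {Φ : ℝ → ℂ} {M : ℝ} (hM : ∀ y, ‖Φ y‖ ≤ M) (hM' : ∀ y, ‖(Φ y)⁻¹‖ ≤ M) (n : ℕ)
    (x₀ x : ℝ) : ‖genX Φ n x₀ x‖ ≤ (M * |x - x₀|) ^ n := by
  have hM₀ : 0 ≤ M := (norm_nonneg _).trans (hM 0)
  have hpow : ∀ m y, ‖Φ y ^ ((-1 : ℤ) ^ m)‖ ≤ M := fun m y => by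
    rcases neg_one_pow_eq_or ℤ m with h | h
    · rw [h, zpow_one]; exact hM y
    · rw [h, zpow_neg_one]; exact hM' y
  induction n generalizing x with
  | zero => simp [genX]
  | succ n ih =>
    have hint : ‖∫ ξ in x₀..x, genX Φ n x₀ ξ * Φ ξ ^ ((-1 : ℤ) ^ (n + 1))‖ ≤
        ∫ ξ in Set.uIoc x₀ x, M ^ (n + 1) * |ξ - x₀| ^ n := by
      rw [intervalIntegral.norm_integral_eq_norm_integral_uIoc]
      refine MeasureTheory.norm_integral_le_of_norm_le
        (by fun_prop : Continuous fun ξ => M ^ (n + 1) * |ξ - x₀| ^ n).integrableOn_uIoc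
        (MeasureTheory.ae_restrict_of_forall_mem measurableSet_uIoc fun ξ _ => ?_)
      rw [norm_mul]
      calc ‖genX Φ n x₀ ξ‖ * ‖Φ ξ ^ ((-1 : ℤ) ^ (n + 1))‖ ≤ (M * |ξ - x₀|) ^ n * M := by
            gcongr
            exacts [ih ξ, hpow _ ξ]
        _ = M ^ (n + 1) * |ξ - x₀| ^ n := by ring
    rw [MeasureTheory.integral_const_mul, integral_pow_abs_sub_uIoc] at hint
    simp only [genX, norm_mul, Complex.norm_natCast]
    calc ((n + 1 : ℕ) : ℝ) * ‖∫ ξ in x₀..x, genX Φ n x₀ ξ * Φ ξ ^ ((-1 : ℤ) ^ (n + 1))‖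
        ≤ (n + 1) * (M ^ (n + 1) * (|x - x₀| ^ (n + 1) / (n + 1))) := by
          push_cast; gcongr
      _ = (M * |x - x₀|) ^ (n + 1) := by field_simp; ring

theorem summable_norm_genX_div_factorial {Φ : ℝ → ℂ} {M : ℝ} (hM : ∀ y, ‖Φ y‖ ≤ M)
    (hM' : ∀ y, ‖(Φ y)⁻¹‖ ≤ M) (x₀ x : ℝ) :
    Summable fun n => ‖genX Φ n x₀ x / n.factorial‖ :=
  (Real.summable_pow_div_factorial (M * |x - x₀|)).of_nonneg_of_le (fun _ => norm_nonneg _)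
    fun n => by
      rw [norm_div, Complex.norm_natCast]
      gcongr
      exact norm_genX_le hM hM' n x₀ x

theorem sum_antidiagonal_neg_one_pow_genX_mul_genX_inv_eq_zero {Φ : ℝ → ℂ} (hc : Continuous Φ)
    (h0 : ∀ y, Φ y ≠ 0) (x₀ x : ℝ) (n : ℕ) :
    ∑ p ∈ antidiagonal (2 * n + 2), (-1) ^ p.1 * (genX Φ p.1 x₀ x / p.1.factorial) *
      (genX Φ⁻¹ p.2 x₀ x / p.2.factorial) = 0 := by
  set B := fun z => ∑ p ∈ antidiagonal (2 * n + 2), (-1) ^ p.1 * (genX Φ p.1 x₀ z / p.1.factorial) *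
      (genX Φ⁻¹ p.2 x₀ z / p.2.factorial)
  have hB : ∀ y, HasDerivAt B 0 y := fun y =>
    hasDerivAt_sum_antidiagonal_neg_one_pow_mul (u := fun m z => genX Φ m x₀ z / m.factorial)
      (v := fun m z => genX Φ⁻¹ m x₀ z / m.factorial) (w := fun m => Φ y ^ ((-1 : ℤ) ^ m))
      (fun m => by simp [pow_succ]) (by simpa [genX] using hasDerivAt_const y (1 : ℂ))
      (by simpa [genX] using hasDerivAt_const y (1 : ℂ))
      (fun m => hasDerivAt_genX_succ_div_factorial hc h0 m x₀ y)
      (fun m => (hasDerivAt_genX_succ_div_factorial (hc.inv₀ h0) (fun y => inv_ne_zero (h0 y))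
        m x₀ y).congr_deriv (by simp [inv_zpow', pow_succ])) n
  have hB₀ : B x₀ = 0 := sum_eq_zero fun p hp => by
    rw [HasAntidiagonal.mem_antidiagonal] at hp
    rcases p with ⟨_ | i, _ | k⟩
    · omega
    all_goals simp [genX_succ_self]
  rw [← hB₀]
  exact is_const_of_deriv_eq_zero (fun y => (hB y).differentiableAt) (fun y => (hB y).deriv) x x₀

theorem genCh_mul_genCht_sub_genSh_mul_genSht_eq_one {Φ : ℝ → ℂ} (hc : Continuous Φ)
    (h0 : ∀ y, Φ y ≠ 0) {M : ℝ} (hM : ∀ y, ‖Φ y‖ ≤ M) (hM' : ∀ y, ‖(Φ y)⁻¹‖ ≤ M) (x₀ x : ℝ) :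
    genCh Φ x₀ x * genCht Φ x₀ x - genSh Φ x₀ x * genSht Φ x₀ x = 1 := by
  have key := tsum_even_mul_tsum_even_sub_tsum_odd_mul_tsum_odd
    (summable_norm_genX_div_factorial hM hM' x₀ x)
    (summable_norm_genX_div_factorial (Φ := Φ⁻¹) (by simpa using hM') (by simpa using hM) x₀ x)
    (sum_antidiagonal_neg_one_pow_genX_mul_genX_inv_eq_zero hc h0 x₀ x)
  simpa [genCh, genCht, genSh, genSht, genXt_eq_genX_inv, genX] using key

theorem stmt_11 (a b : ℝ) (Φ : ℝ → ℂ) (hΦc : ContinuousOn Φ (Set.Icc a b))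
    (hΦ0 : ∀ y ∈ Set.Icc a b, Φ y ≠ 0) (x₀ x : ℝ)
    (hx₀ : x₀ ∈ Set.Icc a b) (hx : x ∈ Set.Icc a b) :
    genCh Φ x₀ x * genCht Φ x₀ x - genSh Φ x₀ x * genSht Φ x₀ x = 1 := by
  have hab : a ≤ b := hx₀.1.trans hx₀.2
  set Ψ : ℝ → ℂ := fun y => Φ (Set.projIcc a b hab y)
  have hmem : ∀ y, (Set.projIcc a b hab y : ℝ) ∈ Set.Icc a b := fun y => (Set.projIcc a b hab y).2
  have hΨ : Set.EqOn Φ Ψ (Set.Icc a b) := fun y hy => by simp [Ψ, Set.projIcc_of_mem hab hy]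
  obtain ⟨M₁, hM₁⟩ := isCompact_Icc.exists_bound_of_continuousOn hΦc
  obtain ⟨M₂, hM₂⟩ := isCompact_Icc.exists_bound_of_continuousOn (hΦc.inv₀ hΦ0)
  have key := genCh_mul_genCht_sub_genSh_mul_genSht_eq_one (Φ := Ψ)
    (hΦc.comp_continuous (continuous_subtype_val.comp continuous_projIcc) hmem)
    (fun y => hΦ0 _ (hmem y)) (M := max M₁ M₂)
    (fun y => (hM₁ _ (hmem y)).trans (le_max_left _ _))
    (fun y => (hM₂ _ (hmem y)).trans (le_max_right _ _)) x₀ x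
  have hX := fun n => genX_congr hΨ hx₀ n hx
  have hXt := fun n => genX_congr (Φ := Φ⁻¹) (Ψ := Ψ⁻¹) (fun y hy => by simp [hΨ hy]) hx₀ n hx
  simpa only [genCh, genCht, genSh, genSht, genXt_eq_genX_inv, hX, hXt] using key
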